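/- arXiv:2108.11473 — 3 statements merged into one kernel-verified Lean document; each statement's English description precedes it below -/
import Mathlib

section
/- If H : [0,∞) → [0,∞) is non-decreasing, then 2∫₀^∞ e^{-2t} H(t)² dt ≤ (∫₀^∞ e^{-t} H(t) dt)². -/
/-!
Put `f t = e^{-t} H(t)`. Since `H` is non-decreasing,
`e^{-s} H(s) = ∫_s^∞ e^{-t} H(s) dt ≤ ∫_s^∞ f`, so `e^{-2s} H(s)² ≤ f(s) ∫_s^∞ f`.
Integrating over `s`, the right-hand side becomes the integral of `f(s) f(t)` over the triangle
`s < t`, which by symmetry is at most half of `(∫ f)²`.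
-/

open MeasureTheory Real Set ENNReal

section Triangle

variable {α : Type*} [MeasurableSpace α] [TopologicalSpace α] [LinearOrder α]
  [OrderClosedTopology α] [SecondCountableTopology α] [OpensMeasurableSpace α]
  {μ : Measure α} [SFinite μ] {f : α → ℝ≥0∞}

theorem lintegral_mul_setLIntegral_Ioi_le_Iic (hf : AEMeasurable f μ) :
    ∫⁻ s, f s * ∫⁻ t in Ioi s, f t ∂μ ∂μ ≤ ∫⁻ s, f s * ∫⁻ t in Iic s, f t ∂μ ∂μ := by
  set F : α × α → ℝ≥0∞ := {p : α × α | p.1 < p.2}.indicator fun p => f p.1 * f p.2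
  have hF : AEMeasurable F (μ.prod μ) :=
    (hf.comp_fst.mul hf.comp_snd).indicator (measurableSet_lt measurable_fst measurable_snd)
  calc ∫⁻ s, f s * ∫⁻ t in Ioi s, f t ∂μ ∂μ
      = ∫⁻ s, ∫⁻ t, F (s, t) ∂μ ∂μ := by
        refine lintegral_congr fun s => ?_
        rw [← lintegral_const_mul'' _ hf.restrict, ← lintegral_indicator measurableSet_Ioi]
        rfl
    _ = ∫⁻ t, ∫⁻ s, F (s, t) ∂μ ∂μ := lintegral_lintegral_swap (f := fun s t => F (s, t)) hF
    _ = ∫⁻ t, f t * ∫⁻ s in Iio t, f s ∂μ ∂μ := by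
        refine lintegral_congr fun t => ?_
        rw [← lintegral_const_mul'' _ hf.restrict, ← lintegral_indicator measurableSet_Iio]
        refine lintegral_congr fun s => ?_
        by_cases hst : s < t <;> simp [F, hst, mul_comm]
    _ ≤ ∫⁻ t, f t * ∫⁻ s in Iic t, f s ∂μ ∂μ := by
        gcongr with t
        exact Iio_subset_Iic_self

theorem two_mul_lintegral_mul_setLIntegral_Ioi_le_sq (hf : AEMeasurable f μ) :
    2 * ∫⁻ s, f s * ∫⁻ t in Ioi s, f t ∂μ ∂μ ≤ (∫⁻ t, f t ∂μ) ^ 2 := by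
  have hsplit : ∀ s, ∫⁻ t in Ioi s, f t ∂μ + ∫⁻ t in Iic s, f t ∂μ = ∫⁻ t, f t ∂μ := fun s => by
    rw [add_comm, ← lintegral_union measurableSet_Ioi (Iic_disjoint_Ioi le_rfl), Iic_union_Ioi,
      Measure.restrict_univ]
  calc 2 * ∫⁻ s, f s * ∫⁻ t in Ioi s, f t ∂μ ∂μ
      ≤ ∫⁻ s, f s * ∫⁻ t in Ioi s, f t ∂μ ∂μ + ∫⁻ s, f s * ∫⁻ t in Iic s, f t ∂μ ∂μ := by
        rw [two_mul]
        exact add_le_add_right (lintegral_mul_setLIntegral_Ioi_le_Iic hf) _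
    _ ≤ ∫⁻ s, f s * ∫⁻ t in Ioi s, f t ∂μ + f s * ∫⁻ t in Iic s, f t ∂μ ∂μ :=
        le_lintegral_add _ _
    _ = (∫⁻ t, f t ∂μ) ^ 2 := by
        simp_rw [← mul_add, hsplit]
        rw [lintegral_mul_const'' _ hf, sq]

end Triangle

theorem lintegral_Ioi_ofReal_exp_neg (s : ℝ) :
    ∫⁻ t in Ioi s, ENNReal.ofReal (exp (-t)) = ENNReal.ofReal (exp (-s)) := by
  rw [← ofReal_integral_eq_lintegral_ofReal (integrableOn_exp_neg_Ioi s)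
    (Filter.Eventually.of_forall fun t => (exp_pos _).le), integral_exp_neg_Ioi]

theorem ofReal_exp_neg_mul_le_setLIntegral_Ioi {H : ℝ → ℝ≥0∞} {s : ℝ}
    (hmono : MonotoneOn H (Ici s)) :
    ENNReal.ofReal (exp (-s)) * H s ≤ ∫⁻ t in Ioi s, ENNReal.ofReal (exp (-t)) * H t :=
  calc ENNReal.ofReal (exp (-s)) * H s
      = ∫⁻ t in Ioi s, ENNReal.ofReal (exp (-t)) * H s := by
        rw [lintegral_mul_const _ measurable_neg.exp.ennreal_ofReal, lintegral_Ioi_ofReal_exp_neg]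
    _ ≤ ∫⁻ t in Ioi s, ENNReal.ofReal (exp (-t)) * H t :=
        setLIntegral_mono' measurableSet_Ioi fun t ht =>
          mul_le_mul_right (hmono (mem_Ici.2 le_rfl) (mem_Ici.2 (ht.le)) (ht.le)) _

theorem doubleExp_inequality_general (H : ℝ → ℝ≥0∞)
    (hmono : MonotoneOn H (Set.Ici 0)) :
    2 * ∫⁻ t in Set.Ioi (0 : ℝ), ENNReal.ofReal (Real.exp (-2 * t)) * (H t) ^ 2
      ≤ (∫⁻ t in Set.Ioi (0 : ℝ), ENNReal.ofReal (Real.exp (-t)) * H t) ^ 2 := by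
  set f : ℝ → ℝ≥0∞ := fun t => ENNReal.ofReal (exp (-t)) * H t
  have hf : AEMeasurable f (volume.restrict (Ioi 0)) :=
    measurable_neg.exp.ennreal_ofReal.aemeasurable.mul
      (aemeasurable_restrict_of_monotoneOn measurableSet_Ioi (hmono.mono Ioi_subset_Ici_self))
  have hpoint : ∀ s ∈ Ioi (0 : ℝ), ENNReal.ofReal (exp (-2 * s)) * H s ^ 2
      ≤ f s * ∫⁻ t in Ioi s, f t ∂volume.restrict (Ioi 0) := fun s hs => by
    have hexp : ENNReal.ofReal (exp (-2 * s)) * H s ^ 2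
        = f s * (ENNReal.ofReal (exp (-s)) * H s) := by
      rw [show -2 * s = -s + -s by ring, exp_add, ENNReal.ofReal_mul (exp_pos _).le]
      ring
    rw [hexp, Measure.restrict_restrict measurableSet_Ioi,
      inter_eq_left.2 (Ioi_subset_Ioi (hs.le))]
    gcongr
    exact ofReal_exp_neg_mul_le_setLIntegral_Ioi (hmono.mono (Ici_subset_Ici.2 (hs.le)))
  calc 2 * ∫⁻ t in Ioi 0, ENNReal.ofReal (exp (-2 * t)) * H t ^ 2
      ≤ 2 * ∫⁻ s in Ioi 0, f s * ∫⁻ t in Ioi s, f t ∂volume.restrict (Ioi 0) :=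
        mul_le_mul_right (setLIntegral_mono' measurableSet_Ioi hpoint) _
    _ ≤ (∫⁻ t in Ioi 0, f t) ^ 2 := two_mul_lintegral_mul_setLIntegral_Ioi_le_sq hf

theorem doubleExp_inequality (H : ℝ → ℝ≥0∞)
    (hmono : MonotoneOn H (Set.Ici 0)) (hmeas : Measurable H) :
    2 * ∫⁻ t in Set.Ioi (0 : ℝ), ENNReal.ofReal (Real.exp (-2 * t)) * (H t) ^ 2
      ≤ (∫⁻ t in Set.Ioi (0 : ℝ), ENNReal.ofReal (Real.exp (-t)) * H t) ^ 2 :=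
  doubleExp_inequality_general H hmono
end

section
/- Suppose that for all f ∈ F_a we have (∬ γ(x−y) f²(x) f²(y) dx dy)^{1/2} ≤ σ^{1/2} · ℰ_a(f,f)^{α/(2a)} with best constant σ, where 0 < α < 2a. Then ℳ_{a,d}(γ,1) := sup_{g∈F_a} { (∬ g²(x)g²(y)γ(x−y) dx dy)^{1/2} − (1/2)ℰ_a(g,g) } equals (α/a)^{α/(2a−α)} · ((2a−α)/(2a)) · σ^{a/(2a−α)}. -/
open Real MeasureTheory

/-- The Fourier transform `ĝ(ξ) = ∫ e^{-i x·ξ} g(x) dx`. -/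
noncomputable def fourierKer (d : ℕ) (g : EuclideanSpace ℝ (Fin d) → ℝ)
    (ξ : EuclideanSpace ℝ (Fin d)) : ℂ :=
  ∫ x, Complex.exp (-Complex.I * (inner ℝ x ξ : ℝ)) * (g x : ℂ)

/-- The Dirichlet-type energy `ℰ_a(g,g) = (2π)^{-d} ∫ |ξ|^a |ĝ(ξ)|² dξ`. -/
noncomputable def energyE (d : ℕ) (a : ℝ) (g : EuclideanSpace ℝ (Fin d) → ℝ) : ℝ :=
  (2 * Real.pi) ^ (-(d : ℝ)) * ∫ ξ, ‖ξ‖ ^ a * (‖fourierKer d g ξ‖) ^ 2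

/-- The class `F_a` of normalized functions with finite energy. -/
noncomputable def classFa (d : ℕ) (a : ℝ) : Set (EuclideanSpace ℝ (Fin d) → ℝ) :=
  { f | (∫ x, (f x) ^ 2) = 1 ∧
        Integrable (fun ξ => ‖ξ‖ ^ a * (‖fourierKer d f ξ‖) ^ 2) }

/-- The variational constant `ℳ_{a,d}(γ,1)`. -/
noncomputable def constM1 (d : ℕ) (a : ℝ) (γ : EuclideanSpace ℝ (Fin d) → ℝ) : ℝ :=
  sSup { r : ℝ | ∃ g ∈ classFa d a,
    r = Real.sqrt (∫ x, ∫ y, (g x) ^ 2 * (g y) ^ 2 * γ (x - y))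
          - 1 / 2 * energyE d a g }

/-! The dilations `g ↦ t ^ (d / 2) * g (t • ·)` preserve `F_a` and multiply the energy by `t ^ a`
and the interaction by `t ^ α`. Writing `E = ℰ_a(g,g)`, `β = α / (2a)` and
`C = √(interaction of g) / E ^ β`, maximizing over the dilations of `g` turns the functional into
`max_{s ≥ 0} (C * s ^ β - s / 2) = powGainMax β C`, increasing and continuous in `C`. The sharp
inequality says exactly that the supremum of `C` over `F_a` is `√σ`, hence `ℳ = powGainMax β √σ`;
since this supremum need not be attained, the lower bound approximates `√σ` from below. -/

lemma energyE_nonneg {d : ℕ} (a : ℝ) (g : EuclideanSpace ℝ (Fin d) → ℝ) : 0 ≤ energyE d a g :=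
  mul_nonneg (by positivity) (integral_nonneg fun ξ => by positivity)

noncomputable def selfInteraction {d : ℕ} (γ g : EuclideanSpace ℝ (Fin d) → ℝ) : ℝ :=
  ∫ x, ∫ y, g x ^ 2 * g y ^ 2 * γ (x - y)

lemma selfInteraction_eq_integral_integral {d : ℕ} (γ g : EuclideanSpace ℝ (Fin d) → ℝ) :
    selfInteraction γ g = ∫ x, ∫ y, γ (x - y) * g x ^ 2 * g y ^ 2 := by
  unfold selfInteraction
  congr 1 with x
  congr 1 with y
  ring

section Dilation

variable {d : ℕ} {t : ℝ}

noncomputable def dilate (d : ℕ) (t : ℝ) (g : EuclideanSpace ℝ (Fin d) → ℝ) :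
    EuclideanSpace ℝ (Fin d) → ℝ :=
  fun x => t ^ ((d : ℝ) / 2) * g (t • x)

lemma integral_rpow_smul_comp_smul {F : Type*} [NormedAddCommGroup F] [NormedSpace ℝ F]
    (ht : 0 < t) (f : EuclideanSpace ℝ (Fin d) → F) :
    ∫ x, t ^ (d : ℝ) • f (t • x) = ∫ x, f x := by
  rw [integral_smul, Measure.integral_comp_smul, finrank_euclideanSpace_fin, smul_smul,
    abs_of_pos (by positivity), rpow_natCast, mul_inv_cancel₀ (by positivity), one_smul]

lemma dilate_sq (ht : 0 < t) (g : EuclideanSpace ℝ (Fin d) → ℝ) (x : EuclideanSpace ℝ (Fin d)) :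
    dilate d t g x ^ 2 = t ^ (d : ℝ) * g (t • x) ^ 2 := by
  rw [dilate, mul_pow, ← rpow_natCast, ← rpow_mul ht.le]
  norm_num

lemma integral_dilate_sq (ht : 0 < t) (g : EuclideanSpace ℝ (Fin d) → ℝ) :
    ∫ x, dilate d t g x ^ 2 = ∫ x, g x ^ 2 := by
  simp_rw [dilate_sq ht]
  exact integral_rpow_smul_comp_smul ht (fun x => g x ^ 2)

lemma fourierKer_dilate (ht : 0 < t) (g : EuclideanSpace ℝ (Fin d) → ℝ)
    (ξ : EuclideanSpace ℝ (Fin d)) :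
    fourierKer d (dilate d t g) ξ = t ^ (-(d : ℝ) / 2) • fourierKer d g (t⁻¹ • ξ) := by
  have hinner : ∀ x : EuclideanSpace ℝ (Fin d), inner ℝ (t • x) (t⁻¹ • ξ) = inner ℝ x ξ := by
    intro x
    rw [real_inner_smul_left, real_inner_smul_right, mul_inv_cancel_left₀ ht.ne']
  rw [fourierKer, fourierKer, ← integral_smul]
  conv_rhs => rw [← integral_rpow_smul_comp_smul ht]
  congr 1 with x
  rw [hinner, dilate, smul_smul, ← rpow_add ht, show (d : ℝ) + -d / 2 = d / 2 by ring,
    Complex.real_smul]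
  push_cast
  ring

lemma energyIntegrand_dilate (a : ℝ) (ht : 0 < t) (g : EuclideanSpace ℝ (Fin d) → ℝ) :
    (fun ξ => ‖ξ‖ ^ a * ‖fourierKer d (dilate d t g) ξ‖ ^ 2) = fun ξ =>
      t ^ a * (t⁻¹ ^ (d : ℝ) • (‖t⁻¹ • ξ‖ ^ a * ‖fourierKer d g (t⁻¹ • ξ)‖ ^ 2)) := by
  funext ξ
  rw [fourierKer_dilate ht, norm_smul, norm_smul, norm_inv, Real.norm_of_nonneg ht.le,
    Real.norm_of_nonneg (by positivity), mul_rpow (by positivity) (norm_nonneg _),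
    inv_rpow ht.le, inv_rpow ht.le, smul_eq_mul, mul_pow, ← rpow_natCast _ 2, ← rpow_mul ht.le,
    show -(d : ℝ) / 2 * (2 : ℕ) = -d by push_cast; ring, rpow_neg ht.le]
  field_simp

lemma energyE_dilate (a : ℝ) (ht : 0 < t) (g : EuclideanSpace ℝ (Fin d) → ℝ) :
    energyE d a (dilate d t g) = t ^ a * energyE d a g := by
  rw [energyE, energyE, energyIntegrand_dilate a ht, integral_const_mul,
    integral_rpow_smul_comp_smul (inv_pos.2 ht) (fun η => ‖η‖ ^ a * ‖fourierKer d g η‖ ^ 2)]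
  ring

lemma dilate_mem_classFa {a : ℝ} (ht : 0 < t) {g : EuclideanSpace ℝ (Fin d) → ℝ}
    (hg : g ∈ classFa d a) : dilate d t g ∈ classFa d a := by
  refine ⟨(integral_dilate_sq ht g).trans hg.1, ?_⟩
  rw [energyIntegrand_dilate a ht]
  exact ((Integrable.comp_smul hg.2 (inv_ne_zero ht.ne')).smul (t⁻¹ ^ (d : ℝ))).const_mul _

lemma selfInteraction_dilate {α : ℝ} {γ : EuclideanSpace ℝ (Fin d) → ℝ}
    (hhom : ∀ c : ℝ, 0 < c → ∀ x, γ (c • x) = c ^ (-α) * γ x) (ht : 0 < t)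
    (g : EuclideanSpace ℝ (Fin d) → ℝ) :
    selfInteraction γ (dilate d t g) = t ^ α * selfInteraction γ g := by
  have hγ : ∀ x y : EuclideanSpace ℝ (Fin d), γ (x - y) = t ^ α * γ (t • x - t • y) := by
    intro x y
    rw [← smul_sub, hhom t ht, ← mul_assoc, ← rpow_add ht, add_neg_cancel, rpow_zero, one_mul]
  set G := fun u v : EuclideanSpace ℝ (Fin d) => g u ^ 2 * g v ^ 2 * γ (u - v)
  calc selfInteraction γ (dilate d t g)
      = ∫ x, t ^ α * (t ^ (d : ℝ) • ∫ y, t ^ (d : ℝ) • G (t • x) (t • y)) := by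
        unfold selfInteraction
        congr 1 with x
        simp only [smul_eq_mul, ← integral_const_mul]
        congr 1 with y
        rw [dilate_sq ht, dilate_sq ht, hγ]
        ring
    _ = t ^ α * ∫ x, t ^ (d : ℝ) • ∫ v, G (t • x) v := by
        rw [← integral_const_mul]
        congr 1 with x
        rw [integral_rpow_smul_comp_smul ht (G (t • x))]
    _ = t ^ α * selfInteraction γ g := by
        rw [integral_rpow_smul_comp_smul ht (fun u => ∫ v, G u v)]
        rfl

end Dilation

section PowGain

variable {β C : ℝ}

/-- The maximum of `s ↦ C * s ^ β - s / 2` on `s ≥ 0`, attained at `(2 * β * C) ^ (1 / (1 - β))`. -/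
noncomputable def powGainMax (β C : ℝ) : ℝ :=
  (1 - β) * (2 * β) ^ (β / (1 - β)) * C ^ (1 / (1 - β))

lemma exists_powGainMax_eq (hC : 0 < C) (hβ0 : 0 < β) (hβ1 : β < 1) :
    ∃ s > 0, s ^ (1 - β) = 2 * β * C ∧ powGainMax β C = (1 - β) / (2 * β) * s := by
  have h1β : 1 - β ≠ 0 := by linarith
  refine ⟨(2 * β * C) ^ (1 / (1 - β)), by positivity, ?_, ?_⟩
  · rw [← rpow_mul (by positivity), one_div_mul_cancel h1β, rpow_one]
  · have h2β : (2 * β) ^ (1 / (1 - β)) = (2 * β) ^ (β / (1 - β)) * (2 * β) := by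
      rw [← rpow_add_one (by positivity)]
      congr 1
      field_simp
      ring
    rw [powGainMax, mul_rpow (by positivity) hC.le, h2β]
    field_simp

lemma mul_rpow_sub_half_le_powGainMax (hC : 0 < C) (hβ0 : 0 < β) (hβ1 : β < 1) {t : ℝ}
    (ht : 0 ≤ t) : C * t ^ β - t / 2 ≤ powGainMax β C := by
  obtain ⟨s, hs, hs1, hmax⟩ := exists_powGainMax_eq hC hβ0 hβ1
  have hamgm : t ^ β * s ^ (1 - β) ≤ β * t + (1 - β) * s :=
    geom_mean_le_arith_mean2_weighted hβ0.le (by linarith) ht hs.le (by ring)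
  rw [hs1] at hamgm
  rw [hmax, div_mul_eq_mul_div, le_div_iff₀ (by positivity)]
  nlinarith

lemma exists_mul_rpow_sub_half_eq_powGainMax (hC : 0 < C) (hβ0 : 0 < β) (hβ1 : β < 1) :
    ∃ s > 0, C * s ^ β - s / 2 = powGainMax β C := by
  obtain ⟨s, hs, hs1, hmax⟩ := exists_powGainMax_eq hC hβ0 hβ1
  have hsplit : s ^ β * (2 * β * C) = s := by
    rw [← hs1, ← rpow_add hs, add_sub_cancel, rpow_one]
  refine ⟨s, hs, ?_⟩
  rw [hmax]
  field_simp
  linear_combination hsplit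

lemma powGainMax_mono (hβ0 : 0 < β) (hβ1 : β < 1) {D : ℝ} (hC : 0 ≤ C) (hCD : C ≤ D) :
    powGainMax β C ≤ powGainMax β D := by
  have h1β : 0 < 1 - β := by linarith
  unfold powGainMax
  gcongr

lemma powGainMax_le_of_forall_lt (hβ1 : β < 1) {L : ℝ} (hC : 0 < C)
    (h : ∀ D, 0 < D → D < C → powGainMax β D ≤ L) : powGainMax β C ≤ L := by
  have hcont : Continuous (powGainMax β) :=
    continuous_const.mul (continuous_rpow_const (one_div_pos.2 (sub_pos.2 hβ1)).le)
  have hIoo : Set.Ioo 0 C ⊆ {D | powGainMax β D ≤ L} := fun D hD => h D hD.1 hD.2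
  rw [← (isClosed_le hcont continuous_const).closure_subset_iff, closure_Ioo hC.ne] at hIoo
  exact hIoo ⟨hC.le, le_rfl⟩

end PowGain

lemma powGainMax_sqrt_eq {a α σ : ℝ} (ha : 0 < a) (hαa : α < 2 * a) (hσ : 0 ≤ σ) :
    powGainMax (α / (2 * a)) √σ
      = (α / a) ^ (α / (2 * a - α)) * ((2 * a - α) / (2 * a)) * σ ^ (a / (2 * a - α)) := by
  have h2aα : 2 * a - α ≠ 0 := by linarith
  have e1 : 1 - α / (2 * a) = (2 * a - α) / (2 * a) := by field_simp
  have e2 : 2 * (α / (2 * a)) = α / a := by field_simp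
  have e3 : α / (2 * a) / ((2 * a - α) / (2 * a)) = α / (2 * a - α) := by field_simp
  have e4 : 1 / 2 * (1 / ((2 * a - α) / (2 * a))) = a / (2 * a - α) := by field_simp
  rw [powGainMax, sqrt_eq_rpow, ← rpow_mul hσ, e1, e2, e3, e4]
  ring

section Variational

variable {d : ℕ} {a α : ℝ} {γ : EuclideanSpace ℝ (Fin d) → ℝ}

noncomputable def variationalFunctional (d : ℕ) (a : ℝ) (γ g : EuclideanSpace ℝ (Fin d) → ℝ) :
    ℝ :=
  √(selfInteraction γ g) - 1 / 2 * energyE d a g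

lemma constM1_eq_sSup_image :
    constM1 d a γ = sSup (variationalFunctional d a γ '' classFa d a) := by
  unfold constM1
  congr 1
  ext r
  simp [variationalFunctional, selfInteraction, eq_comm]

lemma variationalFunctional_le_powGainMax {β C : ℝ} (hC : 0 < C) (hβ0 : 0 < β) (hβ1 : β < 1)
    {g : EuclideanSpace ℝ (Fin d) → ℝ} (hg : √(selfInteraction γ g) ≤ C * energyE d a g ^ β) :
    variationalFunctional d a γ g ≤ powGainMax β C := by
  have hmax := mul_rpow_sub_half_le_powGainMax hC hβ0 hβ1 (energyE_nonneg a g)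
  unfold variationalFunctional
  linarith

lemma variationalFunctional_dilate (hhom : ∀ c : ℝ, 0 < c → ∀ x, γ (c • x) = c ^ (-α) * γ x)
    {t : ℝ} (ht : 0 < t) (g : EuclideanSpace ℝ (Fin d) → ℝ) :
    variationalFunctional d a γ (dilate d t g)
      = t ^ (α / 2) * √(selfInteraction γ g) - 1 / 2 * (t ^ a * energyE d a g) := by
  rw [variationalFunctional, selfInteraction_dilate hhom ht, energyE_dilate a ht,
    sqrt_mul (by positivity), sqrt_eq_rpow (t ^ α), ← rpow_mul ht.le]
  ring_nf

lemma energyE_pos_of_bddAbove (hα : 0 < α)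
    (hhom : ∀ c : ℝ, 0 < c → ∀ x, γ (c • x) = c ^ (-α) * γ x)
    (hbdd : BddAbove (variationalFunctional d a γ '' classFa d a))
    {g : EuclideanSpace ℝ (Fin d) → ℝ} (hg : g ∈ classFa d a) (hI : 0 < √(selfInteraction γ g)) :
    0 < energyE d a g := by
  refine (energyE_nonneg a g).lt_of_ne fun hE => ?_
  obtain ⟨B, hB⟩ := hbdd
  have htend : Filter.Tendsto (fun t : ℝ => t ^ (α / 2) * √(selfInteraction γ g))
      Filter.atTop Filter.atTop :=
    (tendsto_rpow_atTop (by positivity)).atTop_mul_const hI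
  obtain ⟨t, htB, ht⟩ :=
    ((htend.eventually_gt_atTop B).and (Filter.eventually_gt_atTop 0)).exists
  have hle := hB (Set.mem_image_of_mem _ (dilate_mem_classFa ht hg))
  rw [variationalFunctional_dilate hhom ht, ← hE, mul_zero, mul_zero, sub_zero] at hle
  exact hle.not_gt htB

lemma powGainMax_le_sSup_variationalFunctional (ha : 0 < a) (hα : 0 < α) (hαa : α < 2 * a)
    (hhom : ∀ c : ℝ, 0 < c → ∀ x, γ (c • x) = c ^ (-α) * γ x)
    (hbdd : BddAbove (variationalFunctional d a γ '' classFa d a))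
    {g : EuclideanSpace ℝ (Fin d) → ℝ} (hg : g ∈ classFa d a) {C : ℝ} (hC : 0 < C)
    (hlt : C * energyE d a g ^ (α / (2 * a)) < √(selfInteraction γ g)) :
    powGainMax (α / (2 * a)) C ≤ sSup (variationalFunctional d a γ '' classFa d a) := by
  set β := α / (2 * a) with hβ
  have hβ0 : 0 < β := by positivity
  have hβ1 : β < 1 := (div_lt_one (by positivity)).2 hαa
  have hE : 0 < energyE d a g := energyE_pos_of_bddAbove hα hhom hbdd hg
    ((mul_nonneg hC.le (rpow_nonneg (energyE_nonneg a g) _)).trans_lt hlt)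
  set E := energyE d a g with hEdef
  have hCK : C ≤ √(selfInteraction γ g) / E ^ β := (le_div_iff₀ (by positivity)).2 hlt.le
  obtain ⟨s, hs, hval⟩ := exists_mul_rpow_sub_half_eq_powGainMax (hC.trans_le hCK) hβ0 hβ1
  -- the dilation whose energy is the maximiser `s`
  set t := (s / E) ^ (1 / a)
  have ht : 0 < t := by positivity
  have hta : t ^ a = s / E := by
    rw [← rpow_mul (by positivity), one_div_mul_cancel ha.ne', rpow_one]
  have htα : t ^ (α / 2) = (s / E) ^ β := by
    rw [← hta, ← rpow_mul ht.le, hβ]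
    field_simp
  calc powGainMax β C ≤ powGainMax β (√(selfInteraction γ g) / E ^ β) :=
        powGainMax_mono hβ0 hβ1 hC.le hCK
    _ = variationalFunctional d a γ (dilate d t g) := by
        rw [← hval, variationalFunctional_dilate hhom ht, htα, hta, div_rpow hs.le hE.le,
          ← hEdef]
        field_simp
    _ ≤ sSup (variationalFunctional d a γ '' classFa d a) :=
        le_csSup hbdd (Set.mem_image_of_mem _ (dilate_mem_classFa ht hg))

end Variational

lemma pos_of_isLeast_sqrt_mul {ι : Type*} {s : Set ι} {u v : ι → ℝ} {σ : ℝ}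
    (hσ : IsLeast {c : ℝ | ∀ i ∈ s, u i ≤ √c * v i} σ) : 0 < σ := by
  by_contra! hσ0
  -- `√c = 0` for every `c ≤ 0`, so with `σ` the set also contains `σ - 1`
  have hmem : σ - 1 ∈ {c : ℝ | ∀ i ∈ s, u i ≤ √c * v i} := fun i hi => by
    simpa [sqrt_eq_zero'.2 hσ0, sqrt_eq_zero'.2 (by linarith : σ - 1 ≤ 0)] using hσ.1 i hi
  linarith [hσ.2 hmem]

theorem constM_closed_form_general (d : ℕ) (a α σ : ℝ) (ha : 0 < a)
    (hα : 0 < α) (hαa : α < 2 * a)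
    (γ : EuclideanSpace ℝ (Fin d) → ℝ)
    (hhom : ∀ c : ℝ, 0 < c → ∀ x, γ (c • x) = c ^ (-α) * γ x)
    (hσ : IsLeast { c : ℝ | ∀ f ∈ classFa d a,
        Real.sqrt (∫ x, ∫ y, γ (x - y) * (f x) ^ 2 * (f y) ^ 2)
          ≤ c ^ (1 / 2 : ℝ) * (energyE d a f) ^ (α / (2 * a)) } σ) :
    constM1 d a γ = (α / a) ^ (α / (2 * a - α)) * ((2 * a - α) / (2 * a)) * σ ^ (a / (2 * a - α)) := by
  simp only [← sqrt_eq_rpow, ← selfInteraction_eq_integral_integral] at hσ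
  set β := α / (2 * a)
  have hβ0 : 0 < β := by positivity
  have hβ1 : β < 1 := (div_lt_one (by positivity)).2 hαa
  have hσ0 : 0 < σ := pos_of_isLeast_sqrt_mul hσ
  have hviol : ∀ c < σ, ∃ f ∈ classFa d a, √c * energyE d a f ^ β < √(selfInteraction γ f) := by
    intro c hc
    by_contra! h
    exact (hσ.2 h).not_gt hc
  have hub : ∀ g ∈ classFa d a, variationalFunctional d a γ g ≤ powGainMax β √σ := fun g hg =>
    variationalFunctional_le_powGainMax (sqrt_pos.2 hσ0) hβ0 hβ1 (hσ.1 g hg)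
  have hbdd : BddAbove (variationalFunctional d a γ '' classFa d a) :=
    ⟨_, Set.forall_mem_image.2 hub⟩
  obtain ⟨f₀, hf₀, -⟩ := hviol (σ - 1) (by linarith)
  rw [constM1_eq_sSup_image, ← powGainMax_sqrt_eq ha hαa hσ0.le]
  refine le_antisymm (csSup_le ⟨_, Set.mem_image_of_mem _ hf₀⟩ (Set.forall_mem_image.2 hub))
    (powGainMax_le_of_forall_lt hβ1 (sqrt_pos.2 hσ0) fun C hC hCσ => ?_)
  obtain ⟨f, hf, hlt⟩ := hviol (C ^ 2) ((lt_sqrt hC.le).1 hCσ)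
  rw [sqrt_sq hC.le] at hlt
  exact powGainMax_le_sSup_variationalFunctional ha hα hαa hhom hbdd hf hC hlt

theorem constM_closed_form (d : ℕ) (hd : 1 ≤ d) (a α σ : ℝ) (ha : 0 < a) (ha2 : a ≤ 2)
    (hα : 0 < α) (hαa : α < 2 * a)
    (γ : EuclideanSpace ℝ (Fin d) → ℝ) (hγpos : ∀ x, 0 ≤ γ x)
    (hhom : ∀ c : ℝ, 0 < c → ∀ x, γ (c • x) = c ^ (-α) * γ x)
    (hσ : IsLeast { c : ℝ | ∀ f ∈ classFa d a,
        Real.sqrt (∫ x, ∫ y, γ (x - y) * (f x) ^ 2 * (f y) ^ 2)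
          ≤ c ^ (1 / 2 : ℝ) * (energyE d a f) ^ (α / (2 * a)) } σ) :
    constM1 d a γ = (α / a) ^ (α / (2 * a - α)) * ((2 * a - α) / (2 * a)) * σ ^ (a / (2 * a - α)) :=
  constM_closed_form_general d a α σ ha hα hαa γ hhom hσ
end

section
/- For any γ > 0, lim_{t→∞} t^{−1/γ} · log( Σ_{n≥0} (n!)^{−γ} t^n ) = γ. -/
/-!
With `s = t ^ (1 / γ)` the `n`-th term of the series is `(s ^ n / n !) ^ γ`. Every `s ^ n / n !`
is at most `exp s`, and for `n ≥ 2 e s` it is at most `2 ^ (-n)`, so the series is `O(s exp (γ s))`.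
Conversely, Stirling's bound `n ! ≤ e √n (n / e) ^ n` makes the term with `n = ⌊s⌋` at least
`(exp (s - 2) / √s) ^ γ`. Hence the logarithm of the series is `γ s + O(log s)`.
-/


open Real Filter Nat Topology

theorem factorial_le_exp_one_mul_sqrt_mul_pow {n : ℕ} (hn : n ≠ 0) :
    (n ! : ℝ) ≤ exp 1 * √n * (n / exp 1) ^ n := by
  obtain ⟨k, rfl⟩ := Nat.exists_eq_succ_of_ne_zero hn
  have hseq : Stirling.stirlingSeq (k + 1) ≤ exp 1 / √2 := by
    simpa using Stirling.stirlingSeq'_antitone (Nat.zero_le k)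
  have hpos : 0 < √(2 * (k + 1 : ℕ) : ℝ) * ((k + 1 : ℕ) / exp 1) ^ (k + 1) := by positivity
  rw [Stirling.stirlingSeq, div_le_iff₀ hpos] at hseq
  refine hseq.trans_eq ?_
  rw [Real.sqrt_mul zero_le_two]
  field_simp

theorem exp_sub_two_div_sqrt_le_pow_floor_div_factorial {s : ℝ} (hs : 1 ≤ s) :
    exp (s - 2) / √s ≤ s ^ ⌊s⌋₊ / (⌊s⌋₊ ! : ℝ) := by
  set m := ⌊s⌋₊
  have hm : m ≠ 0 := (Nat.floor_pos.mpr hs).ne'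
  have hm0 : (0 : ℝ) < m := by positivity
  have hms : (m : ℝ) ≤ s := Nat.floor_le (by linarith)
  have hsm : s < m + 1 := Nat.lt_floor_add_one s
  calc exp (s - 2) / √s ≤ exp (m - 1) / √m := by
        have hexp : exp (s - 2) ≤ exp (m - 1) := exp_le_exp.mpr (by linarith)
        gcongr
    _ = (m : ℝ) ^ m / (exp 1 * √m * (m / exp 1) ^ m) := by
        rw [div_pow, ← exp_nat_mul, exp_sub]
        field_simp
    _ ≤ s ^ m / (m ! : ℝ) := by
        gcongr
        exact factorial_le_exp_one_mul_sqrt_mul_pow hm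

theorem pow_div_factorial_le_half_pow {s : ℝ} (hs : 0 ≤ s) {n : ℕ} (hn : 2 * exp 1 * s ≤ n) :
    s ^ n / (n ! : ℝ) ≤ (1 / 2) ^ n := by
  rcases Nat.eq_zero_or_pos n with rfl | hn0
  · simp
  have hn0' : (0 : ℝ) < n := by exact_mod_cast hn0
  calc s ^ n / (n ! : ℝ) = (s / n) ^ n * ((n : ℝ) ^ n / n !) := by
        rw [div_pow]
        field_simp
    _ ≤ (s / n) ^ n * exp n := by
        gcongr
        exact pow_div_factorial_le_exp _ hn0'.le n
    _ = (exp 1 * s / n) ^ n := by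
        rw [← exp_one_pow, ← mul_pow, mul_div_assoc, mul_comm]
    _ ≤ (1 / 2) ^ n := by
        refine pow_le_pow_left₀ (by positivity) ?_ n
        rw [div_le_iff₀ hn0']
        linarith

theorem tsum_le_of_le_of_le_geometric {f : ℕ → ℝ} (hf : Summable f) {N : ℕ} {M r : ℝ}
    (hr₀ : 0 ≤ r) (hr₁ : r < 1) (hM : ∀ n < N, f n ≤ M) (hgeom : ∀ n, N ≤ n → f n ≤ r ^ n) :
    ∑' n, f n ≤ N * M + (1 - r)⁻¹ := by
  rw [← hf.sum_add_tsum_nat_add N]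
  gcongr
  · simpa using Finset.sum_le_card_nsmul _ _ M fun n hn => hM n (Finset.mem_range.mp hn)
  · rw [← tsum_geometric_of_lt_one hr₀ hr₁]
    refine ((summable_nat_add_iff N).mpr hf).tsum_le_tsum (fun n => ?_)
      (summable_geometric_of_lt_one hr₀ hr₁)
    exact (hgeom _ le_add_self).trans (pow_le_pow_of_le_one hr₀ hr₁.le (Nat.le_add_right n N))

section PowDivFactorialRpow

variable {γ s : ℝ}

theorem rpow_pow_div_factorial_le_geometric (hγ : 0 ≤ γ) (hs : 0 ≤ s) {n : ℕ}
    (hn : 2 * exp 1 * s ≤ n) : (s ^ n / n !) ^ γ ≤ ((1 / 2) ^ γ) ^ n := by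
  rw [rpow_pow_comm (by norm_num)]
  gcongr
  exact pow_div_factorial_le_half_pow hs hn

theorem summable_rpow_pow_div_factorial (hγ : 0 < γ) (hs : 0 ≤ s) :
    Summable fun n : ℕ => (s ^ n / n !) ^ γ := by
  refine .of_norm_bounded_eventually_nat (summable_geometric_of_lt_one (r := (1 / 2) ^ γ)
    (by positivity) (rpow_lt_one (by norm_num) (by norm_num) hγ)) ?_
  filter_upwards [eventually_ge_atTop ⌈2 * exp 1 * s⌉₊] with n hn
  rw [norm_of_nonneg (by positivity)]
  exact rpow_pow_div_factorial_le_geometric hγ.le hs (Nat.ceil_le.mp hn)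

theorem rpow_exp_sub_two_div_sqrt_le_tsum (hγ : 0 < γ) (hs : 1 ≤ s) :
    (exp (s - 2) / √s) ^ γ ≤ ∑' n : ℕ, (s ^ n / n !) ^ γ :=
  calc (exp (s - 2) / √s) ^ γ ≤ (s ^ ⌊s⌋₊ / ⌊s⌋₊ !) ^ γ := by
        gcongr ?_ ^ γ
        exact exp_sub_two_div_sqrt_le_pow_floor_div_factorial hs
    _ ≤ ∑' n : ℕ, (s ^ n / n !) ^ γ :=
        (summable_rpow_pow_div_factorial hγ (by linarith)).le_tsum _ fun n _ => by positivity

theorem exists_tsum_rpow_pow_div_factorial_le (hγ : 0 < γ) :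
    ∃ K > 0, ∀ s : ℝ, 1 ≤ s → ∑' n : ℕ, (s ^ n / n !) ^ γ ≤ K * s * exp (γ * s) := by
  have hr : (1 / 2 : ℝ) ^ γ < 1 := rpow_lt_one (by norm_num) (by norm_num) hγ
  set C := (1 - (1 / 2 : ℝ) ^ γ)⁻¹
  have hC : 0 < C := inv_pos.mpr (by linarith)
  refine ⟨2 * exp 1 + 1 + C, by positivity, fun s hs => ?_⟩
  set N := ⌈2 * exp 1 * s⌉₊
  have hN : (N : ℝ) ≤ 2 * exp 1 * s + 1 := (Nat.ceil_lt_add_one (by positivity)).le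
  have hexp : 1 ≤ exp (γ * s) := one_le_exp (by positivity)
  have hsplit : ∑' n : ℕ, (s ^ n / n !) ^ γ ≤ N * exp (γ * s) + C := by
    refine tsum_le_of_le_of_le_geometric (summable_rpow_pow_div_factorial hγ (by linarith))
      (by positivity) hr (fun n _ => ?_)
      (fun n hn => rpow_pow_div_factorial_le_geometric hγ.le (by linarith) (Nat.ceil_le.mp hn))
    rw [mul_comm, exp_mul]
    gcongr
    exact pow_div_factorial_le_exp _ (by linarith) n
  refine hsplit.trans ?_
  nlinarith [mul_le_mul_of_nonneg_right hN (by positivity : 0 ≤ exp (γ * s)),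
    mul_le_mul_of_nonneg_left hexp hC.le,
    mul_nonneg (mul_nonneg (sub_nonneg.mpr hs) (by positivity : 0 ≤ exp (γ * s)))
      (by positivity : 0 ≤ 2 * exp 1 + 1 + C)]

end PowDivFactorialRpow

theorem tendsto_add_add_mul_log_div (c a b : ℝ) :
    Tendsto (fun s : ℝ => c + (a + b * log s) / s) atTop (𝓝 c) := by
  have hlog : Tendsto (fun s : ℝ => log s / s) atTop (𝓝 0) :=
    isLittleO_log_id_atTop.tendsto_div_nhds_zero
  have hinv : Tendsto (fun s : ℝ => a / s) atTop (𝓝 0) :=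
    tendsto_const_nhds.div_atTop tendsto_id
  simpa [add_div, mul_div_assoc] using tendsto_const_nhds.add (hinv.add (hlog.const_mul b))

theorem tendsto_log_tsum_rpow_pow_div_factorial_div {γ : ℝ} (hγ : 0 < γ) :
    Tendsto (fun s : ℝ => log (∑' n : ℕ, (s ^ n / n !) ^ γ) / s) atTop (𝓝 γ) := by
  obtain ⟨K, hK, hupper⟩ := exists_tsum_rpow_pow_div_factorial_le hγ
  refine tendsto_of_tendsto_of_tendsto_of_le_of_le'
    (tendsto_add_add_mul_log_div γ (-2 * γ) (-(γ / 2)))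
    (tendsto_add_add_mul_log_div γ (log K) 1) ?_ ?_
  all_goals
    filter_upwards [eventually_ge_atTop 1] with s hs
    have hs₀ : 0 < s := by linarith
    have hlower := rpow_exp_sub_two_div_sqrt_le_tsum hγ hs
    have hpos : 0 < (exp (s - 2) / √s) ^ γ := by positivity
  · have := log_le_log hpos hlower
    rw [log_rpow (by positivity), log_div (exp_ne_zero _) (by positivity), log_exp,
      log_sqrt hs₀.le] at this
    rw [le_div_iff₀ hs₀, add_mul, div_mul_cancel₀ _ hs₀.ne']
    linarith
  · have := log_le_log (hpos.trans_le hlower) (hupper s hs)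
    rw [log_mul (by positivity) (exp_ne_zero _), log_mul (by positivity) hs₀.ne',
      log_exp] at this
    rw [div_le_iff₀ hs₀, add_mul, div_mul_cancel₀ _ hs₀.ne']
    linarith

theorem factorial_rpow_neg_mul_pow {γ t : ℝ} (hγ : γ ≠ 0) (ht : 0 ≤ t) (n : ℕ) :
    (n ! : ℝ) ^ (-γ) * t ^ n = ((t ^ (1 / γ)) ^ n / n !) ^ γ := by
  rw [div_rpow (by positivity) (by positivity), ← rpow_pow_comm (by positivity), one_div,
    rpow_inv_rpow ht hγ, rpow_neg (by positivity)]
  ring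

theorem mittag_leffler_log_asymptotics (γ : ℝ) (hγ : 0 < γ) :
    Tendsto (fun t : ℝ =>
        t ^ (-(1 / γ)) * Real.log (∑' n : ℕ, (Nat.factorial n : ℝ) ^ (-γ) * t ^ n))
      atTop (nhds γ) := by
  have hs : Tendsto (fun t : ℝ => t ^ (1 / γ)) atTop atTop := tendsto_rpow_atTop (by positivity)
  refine ((tendsto_log_tsum_rpow_pow_div_factorial_div hγ).comp hs).congr' ?_
  filter_upwards [eventually_ge_atTop 0] with t ht
  simp only [Function.comp_apply, factorial_rpow_neg_mul_pow hγ.ne' ht, rpow_neg ht]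
  ring
end
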